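/- Let G be a group in which every maximal subgroup is normal, and suppose d(G) = 2 (G is generated by two elements but not by one). Then G is almost 3/2-generated: for every g ∈ G such that the coset gG' is part of a generating pair of G/G' (i.e., there exists ȳ ∈ G/G' with ⟨gG', ȳ⟩ = G/G'), there exists h ∈ G with ⟨g, h⟩ = G. -/

import Mathlib

/-!
Since `G` is finitely generated, every proper subgroup lies in a maximal one. A maximal subgroup
`M` that is normal has a quotient `G ⧸ M` without nontrivial proper subgroups, which is therefore
cyclic, so `G' ≤ M`. Hence `G'` lies in the Frattini subgroup, and lifting `ȳ` to any `h ∈ G`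
gives `⟨g, h⟩ G' = G`, which forces `⟨g, h⟩ = G`.
-/

open Subgroup

section

variable {G : Type*} [Group G]

theorem Subgroup.isCompactElement_closure_singleton (x : G) :
    IsCompactElement (closure ({x} : Set G)) := by
  rw [CompleteLattice.isCompactElement_iff_le_of_directed_sSup_le]
  intro s hne hdir hle
  obtain ⟨K, hKs, hxK⟩ := (mem_sSup_of_directedOn hne hdir).mp (hle (mem_closure_singleton_self x))
  exact ⟨K, hKs, (closure_le K).mpr (Set.singleton_subset_iff.mpr hxK)⟩

theorem Subgroup.isCompactElement_closure_finset (S : Finset G) :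
    IsCompactElement (closure (S : Set G)) := by
  have hS : closure (S : Set G) = S.sup fun x => closure {x} := by
    simp only [Finset.sup_eq_iSup, ← closure_iUnion]
    congr
    ext
    simp
  rw [hS]
  exact CompleteLattice.isCompactElement_finsetSup S fun x _ => isCompactElement_closure_singleton x

instance Group.FG.isCoatomic_subgroup [Group.FG G] : IsCoatomic (Subgroup G) := by
  obtain ⟨S, hS⟩ := Group.FG.out (G := G)
  exact CompleteLattice.coatomic_of_top_compact (hS ▸ isCompactElement_closure_finset S)

theorem isCyclic_of_isSimpleOrder_subgroup [IsSimpleOrder (Subgroup G)] : IsCyclic G := by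
  have : Nontrivial G := nontrivial_iff.mp inferInstance
  obtain ⟨x, hx⟩ := exists_ne (1 : G)
  exact isCyclic_iff_exists_zpowers_eq_top.mpr
    ⟨x, (IsSimpleOrder.eq_bot_or_eq_top _).resolve_left (zpowers_eq_bot.not.mpr hx)⟩

theorem commutator_le_of_isCoatom {M : Subgroup G} [M.Normal] (hM : IsCoatom M) :
    commutator G ≤ M := by
  -- `OrderIso.refl` retypes `{H // M ≤ H}` as `Set.Ici M`, which carries the bounded order.
  have : IsSimpleOrder (Subgroup (G ⧸ M)) :=
    ((QuotientGroup.comapMk'OrderIso M).trans (OrderIso.refl (Set.Ici M))).isSimpleOrder_iff.mpr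
      (Set.isSimpleOrder_Ici_iff_isCoatom.mpr hM)
  have : IsCyclic (G ⧸ M) := isCyclic_of_isSimpleOrder_subgroup
  exact Normal.quotient_commutative_iff_commutator_le.mp inferInstance

theorem commutator_le_frattini (hMN : ∀ M : Subgroup G, IsCoatom M → M.Normal) :
    commutator G ≤ frattini G :=
  le_iInf₂ fun M hM => have := hMN M hM; commutator_le_of_isCoatom hM

end

theorem almost_three_halves_generated_general
    {G : Type*} [Group G]
    (hMN : ∀ M : Subgroup G, IsCoatom M → M.Normal)
    (h2 : ∃ x y : G, Subgroup.closure ({x, y} : Set G) = ⊤)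
    (g : G)
    (hg : ∃ ybar : Abelianization G,
      Subgroup.closure ({Abelianization.of g, ybar} : Set (Abelianization G)) = ⊤) :
    ∃ h : G, Subgroup.closure ({g, h} : Set G) = ⊤ := by
  obtain ⟨x, y, hxy⟩ := h2
  have : Group.FG G := Group.fg_iff.mpr ⟨{x, y}, hxy, Set.toFinite _⟩
  obtain ⟨ybar, hybar⟩ := hg
  obtain ⟨h, rfl⟩ := QuotientGroup.mk_surjective ybar
  refine ⟨h, frattini_nongenerating (top_unique ?_)⟩
  have hmap : (closure {g, h}).map Abelianization.of = ⊤ := by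
    rw [MonoidHom.map_closure, Set.image_pair]
    exact hybar
  calc ⊤ = closure {g, h} ⊔ (Abelianization.of : G →* _).ker := by
        rw [← comap_map_eq, hmap, comap_top]
    _ ≤ closure {g, h} ⊔ frattini G :=
        sup_le_sup_left ((Abelianization.ker_of G).trans_le (commutator_le_frattini hMN)) _

theorem almost_three_halves_generated
    {G : Type*} [Group G]
    (hMN : ∀ M : Subgroup G, IsCoatom M → M.Normal)
    (h2 : ∃ x y : G, Subgroup.closure ({x, y} : Set G) = ⊤)
    (hnc : ¬ ∃ x : G, Subgroup.closure ({x} : Set G) = ⊤)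
    (g : G)
    (hg : ∃ ybar : Abelianization G,
      Subgroup.closure ({Abelianization.of g, ybar} : Set (Abelianization G)) = ⊤) :
    ∃ h : G, Subgroup.closure ({g, h} : Set G) = ⊤ :=
  almost_three_halves_generated_general hMN h2 g hg
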